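/- arXiv:2508.14384 — 2 statements merged into one kernel-verified Lean document; each statement's English description precedes it below -/
import Mathlib

section
/- Let x be a string of length n. For j ∈ [0..n−1], define c_j = j + 1 − LEPal_x[j]/2, the center of the longest even-length palindromic suffix of x[0..j] (so c_j = j + 1 when that suffix is empty). Then the sequence (c_0, c_1, …, c_{n−1}) is non-decreasing: j_1 ≤ j_2 implies c_{j_1} ≤ c_{j_2}. -/
/-- The factor `w[i..j]` of `w`, from position `i` to position `j` inclusive
(the empty string when `i > j`). -/
def factor {α : Type*} (w : List α) (i j : ℕ) : List α :=
  (w.drop i).take (j + 1 - i)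

/-- A string is a palindrome if it equals its reverse. -/
def IsPal {α : Type*} (l : List α) : Prop := l.reverse = l

/-- `MEPal w c` is the length of the longest palindromic factor of `w` of the
form `w[c-r..c+r-1]` (with `r ≥ 0`, `c - r ≥ 0`, `c + r ≤ |w|`). -/
noncomputable def MEPal {α : Type*} (w : List α) (c : ℕ) : ℕ :=
  2 * sSup {r : ℕ | r ≤ c ∧ c + r ≤ w.length ∧ IsPal (factor w (c - r) (c + r - 1))}

/-- The maximal even-palindrome array of `w`. -/
noncomputable def MEPalArr {α : Type*} (w : List α) : List ℕ :=
  (List.range w.length).map (MEPal w)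

/-- `LEPal w j` is the length of the longest even-length palindromic suffix of
the prefix `w[0..j]`. -/
noncomputable def LEPal {α : Type*} (w : List α) (j : ℕ) : ℕ :=
  sSup {ℓ : ℕ | ℓ % 2 = 0 ∧ ℓ ≤ j + 1 ∧ IsPal (factor w (j + 1 - ℓ) j)}

/-- The longest even-palindrome array of `w`. -/
noncomputable def LEPalArr {α : Type*} (w : List α) : List ℕ :=
  (List.range w.length).map (LEPal w)

/-- A positive integer `p` is a period of `u` if `u[i] = u[i+p]` for all
`0 ≤ i ≤ |u| - p - 1`. -/
def HasPeriod {α : Type*} (u : List α) (p : ℕ) : Prop :=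
  ∀ i, i + p < u.length → u[i]? = u[i + p]?

theorem IsPal.drop_take {α : Type*} {u : List α} (h : IsPal u) (k : ℕ) :
    IsPal ((u.drop k).take (u.length - 2 * k)) := by
  unfold IsPal at *
  rw [List.reverse_take, List.reverse_drop, h, List.length_drop, List.drop_take]
  rcases le_or_gt (2 * k) u.length with hk | hk
  · rw [show u.length - k - (u.length - 2 * k) = k by omega,
      show u.length - k - k = u.length - 2 * k by omega]
  · simp [show u.length - 2 * k = 0 by omega]

theorem factor_eq_drop_take_factor {α : Type*} (w : List α) {i j : ℕ} (hj : j < w.length)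
    (k : ℕ) :
    factor w (i + k) (j - k) = ((factor w i j).drop k).take ((factor w i j).length - 2 * k) := by
  simp only [factor, List.length_take, List.length_drop, List.drop_take, List.take_take,
    List.drop_drop]
  congr 1
  omega

theorem IsPal.factor_shrink {α : Type*} {w : List α} {i j : ℕ} (h : IsPal (factor w i j))
    (hj : j < w.length) (k : ℕ) : IsPal (factor w (i + k) (j - k)) := by
  rw [factor_eq_drop_take_factor w hj]
  exact h.drop_take k

section LEPal

variable {α : Type*} (w : List α) (j : ℕ)

theorem bddAbove_evenPalSuffixLengths :
    BddAbove {ℓ : ℕ | ℓ % 2 = 0 ∧ ℓ ≤ j + 1 ∧ IsPal (factor w (j + 1 - ℓ) j)} :=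
  ⟨j + 1, fun _ hℓ => hℓ.2.1⟩

theorem LEPal_spec :
    LEPal w j % 2 = 0 ∧ LEPal w j ≤ j + 1 ∧ IsPal (factor w (j + 1 - LEPal w j) j) :=
  Nat.sSup_mem (s := {ℓ : ℕ | ℓ % 2 = 0 ∧ ℓ ≤ j + 1 ∧ IsPal (factor w (j + 1 - ℓ) j)})
    ⟨0, rfl, Nat.zero_le _, by simp [factor, IsPal]⟩ (bddAbove_evenPalSuffixLengths w j)

variable {w j}

theorem le_LEPal {ℓ : ℕ} (hev : ℓ % 2 = 0) (hle : ℓ ≤ j + 1)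
    (hpal : IsPal (factor w (j + 1 - ℓ) j)) : ℓ ≤ LEPal w j :=
  le_csSup (bddAbove_evenPalSuffixLengths w j) ⟨hev, hle, hpal⟩

/-- Cutting `j₂ - j₁` letters off both ends of the longest even palindromic suffix ending at `j₂`
leaves an even palindromic suffix ending at `j₁`. -/
theorem LEPal_sub_le_LEPal {j₁ j₂ : ℕ} (h₁₂ : j₁ ≤ j₂) (h₂ : j₂ < w.length) :
    LEPal w j₂ - 2 * (j₂ - j₁) ≤ LEPal w j₁ := by
  obtain ⟨hev, hle, hpal⟩ := LEPal_spec w j₂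
  rcases le_or_gt (2 * (j₂ - j₁)) (LEPal w j₂) with hd | hd
  · refine le_LEPal (by omega) (by omega) ?_
    have hpal' := hpal.factor_shrink h₂ (j₂ - j₁)
    rwa [show j₂ - (j₂ - j₁) = j₁ by omega,
      show j₂ + 1 - LEPal w j₂ + (j₂ - j₁) = j₁ + 1 - (LEPal w j₂ - 2 * (j₂ - j₁)) by omega]
      at hpal'
  · omega

end LEPal

theorem stmt1 {α : Type*} (x : List α) (j1 j2 : ℕ)
    (h12 : j1 ≤ j2) (h2 : j2 < x.length) :
    j1 + 1 - LEPal x j1 / 2 ≤ j2 + 1 - LEPal x j2 / 2 := by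
  have := LEPal_sub_le_LEPal h12 h2
  omega
end

section
/- Let w be a string of length n, let τ ≥ 1, and let B = [b..b+τ−1] ⊆ [0..n−1] be an interval of τ consecutive integers. Let L = {c ∈ B : MEPal_w[c] > 2τ} be the set of centers in B of maximal even-palindromes of length greater than 2τ. If |L| ≥ 3 and L = {c_1 < c_2 < … < c_N}, then the differences c_{i+1} − c_i are equal for all i ∈ [1..N−1]; that is, L is an arithmetic progression. -/
/-!
Two long even palindromes centred at `c < c'` force the period `2 (c' - c)` on the union of
their spans. For three consecutive long centres `x < y < z` in a block of `τ` positions, the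
two periods `2 (y - x)` and `2 (z - y)` share a window of length `2 (τ + 1)`, which lets the
smaller one propagate over the span of the other. If `y - x < z - y`, reflecting the palindrome
at `y` by the period `2 (y - x)` then yields a long palindrome centred at `y + (y - x)`, strictly
between `y` and `z`; symmetrically if `z - y < y - x`. Hence consecutive gaps are equal.
-/

section Windows

variable {β : Type*}

def HasPeriodOn (f : ℕ → β) (p a z : ℕ) : Prop :=
  ∀ i, a ≤ i → i + p < z → f i = f (i + p)

/-- Positions `s`, `t` with `s + t + 1 = 2 * c` are mirror images about `c`: this says that `f`
is an even palindrome on `[c - r, c + r)`. -/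
def IsEvenPalAt (f : ℕ → β) (c r : ℕ) : Prop :=
  r ≤ c ∧ ∀ s t, s + t + 1 = 2 * c → c - r ≤ s → s < c + r → f s = f t

variable {f : ℕ → β}

theorem HasPeriodOn.mono {p a z a' z' : ℕ} (h : HasPeriodOn f p a z) (ha : a ≤ a')
    (hz : z' ≤ z) : HasPeriodOn f p a' z' :=
  fun i hi hiz => h i (ha.trans hi) (hiz.trans_le hz)

theorem HasPeriodOn.apply_add_mul {p a z i : ℕ} (h : HasPeriodOn f p a z) (hi : a ≤ i) :
    ∀ k, i + k * p < z → f i = f (i + k * p)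
  | 0, _ => by rw [zero_mul, add_zero]
  | k + 1, hk => by
    rw [Nat.succ_mul, ← add_assoc] at hk ⊢
    exact (h.apply_add_mul hi k (by omega)).trans (h _ (by omega) hk)

theorem HasPeriodOn.apply_eq_of_modEq {p a z i j : ℕ} (h : HasPeriodOn f p a z) (hi : a ≤ i)
    (hj : a ≤ j) (hiz : i < z) (hjz : j < z) (hij : i ≡ j [MOD p]) : f i = f j := by
  wlog hle : i ≤ j generalizing i j
  · exact (this hj hi hjz hiz hij.symm (by omega)).symm
  obtain ⟨k, hk⟩ := (Nat.modEq_iff_dvd' hle).1 hij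
  obtain rfl : j = i + k * p := by rw [mul_comm] at hk; omega
  exact h.apply_add_mul hi k hjz

theorem Nat.exists_mem_Ico_modEq (A i : ℕ) {P : ℕ} (hP : 0 < P) :
    ∃ j, A ≤ j ∧ j < A + P ∧ j ≡ i [MOD P] := by
  have hA : A ≤ P * A := Nat.le_mul_of_pos_left A hP
  have hmod := Nat.mod_lt (i + P * A - A) hP
  refine ⟨A + (i + P * A - A) % P, by omega, by omega, ?_⟩
  calc A + (i + P * A - A) % P ≡ A + (i + P * A - A) [MOD P] := (Nat.mod_modEq _ _).add_left A
    _ = i + P * A := by omega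
    _ ≡ i [MOD P] := Nat.add_mul_mod_self_left i P A

/-- Every residue class modulo `P` meets the subwindow `[A, Z - G)`. -/
theorem HasPeriodOn.extend {P G a z A Z : ℕ} (hP : HasPeriodOn f P a z) (hG : HasPeriodOn f G A Z)
    (hP0 : 0 < P) (ha : a ≤ A) (hz : Z ≤ z) (hlen : A + P + G ≤ Z) : HasPeriodOn f G a z := by
  intro i hi hiz
  obtain ⟨j, hAj, hjA, hji⟩ := Nat.exists_mem_Ico_modEq A i hP0
  calc f i = f j := hP.apply_eq_of_modEq hi (by omega) (by omega) (by omega) hji.symm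
    _ = f (j + G) := hG j hAj (by omega)
    _ = f (i + G) := hP.apply_eq_of_modEq (by omega) (by omega) (by omega) hiz (hji.add_right G)

variable {c c' r : ℕ}

theorem IsEvenPalAt.mono {r' : ℕ} (h : IsEvenPalAt f c r) (hr : r' ≤ r) : IsEvenPalAt f c r' :=
  ⟨hr.trans h.1, fun s t hst hs hs' => h.2 s t hst (by omega) (by omega)⟩

theorem IsEvenPalAt.hasPeriodOn (h : IsEvenPalAt f c r) (h' : IsEvenPalAt f c' r) (hc : c ≤ c') :
    HasPeriodOn f (2 * (c' - c)) (c - r) (c' + r) := by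
  obtain ⟨hrc, hpal⟩ := h
  intro i hi hiz
  calc f i = f (2 * c - 1 - i) := hpal i _ (by omega) hi (by omega)
    _ = f (i + 2 * (c' - c)) := h'.2 _ _ (by omega) (by omega) (by omega)

/-- Reflecting through `c` and then translating by a period moves the centre of a palindrome. -/
theorem IsEvenPalAt.of_hasPeriodOn {p a z : ℕ} (h : IsEvenPalAt f c r) (hp : HasPeriodOn f p a z)
    (hmod : 2 * c' ≡ 2 * c [MOD p]) (hcc' : c' ≤ c + r) (hc'c : c ≤ c' + r)
    (ha : a + r ≤ c) (ha' : a + r ≤ c') (hz : c + r ≤ z) (hz' : c' + r ≤ z) :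
    IsEvenPalAt f c' r := by
  have key : ∀ s t, s + t + 1 = 2 * c' → c - r ≤ s → s < c + r → c' - r ≤ t →
      t < c' + r → f s = f t := by
    intro s t hst hs hs' ht ht'
    have hst' : 2 * c - 1 - s ≡ t [MOD p] :=
      hmod.add_right_cancel (by rw [show 2 * c - 1 - s + 2 * c' = t + 2 * c by omega])
    calc f s = f (2 * c - 1 - s) := h.2 s _ (by omega) hs hs'
      _ = f t := hp.apply_eq_of_modEq (by omega) (by omega) (by omega) (by omega) hst'
  refine ⟨by omega, fun s t hst hs hs' => ?_⟩
  rcases (by omega : (c - r ≤ s ∧ s < c + r) ∨ (c - r ≤ t ∧ t < c + r)) with hs₀ | ht₀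
  · exact key s t hst hs₀.1 hs₀.2 (by omega) (by omega)
  · exact (key t s (by omega) ht₀.1 ht₀.2 hs hs').symm

variable {x y z : ℕ}

theorem IsEvenPalAt.add_of_sub_lt_sub (hx : IsEvenPalAt f x r) (hy : IsEvenPalAt f y r)
    (hz : IsEvenPalAt f z r) (hxy : x ≤ y) (hyz : y ≤ z) (hspan : z - x ≤ r)
    (hlt : y - x < z - y) : IsEvenPalAt f (y + (y - x)) r := by
  have hrx := hx.1
  have hP : HasPeriodOn f (2 * (z - y)) (y - r) (z + r) := hy.hasPeriodOn hz hyz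
  have hG : HasPeriodOn f (2 * (y - x)) (y - r) (y + r) :=
    (hx.hasPeriodOn hy hxy).mono (by omega) le_rfl
  refine hy.of_hasPeriodOn (hP.extend hG (by omega) le_rfl (by omega) (by omega))
    ?_ (by omega) (by omega) (by omega) (by omega) (by omega) (by omega)
  rw [show 2 * (y + (y - x)) = 2 * y + 2 * (y - x) by ring]
  exact Nat.add_modEq_right

theorem IsEvenPalAt.sub_of_sub_lt_sub (hx : IsEvenPalAt f x r) (hy : IsEvenPalAt f y r)
    (hz : IsEvenPalAt f z r) (hxy : x ≤ y) (hyz : y ≤ z) (hspan : z - x ≤ r)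
    (hlt : z - y < y - x) : IsEvenPalAt f (y - (z - y)) r := by
  have hrx := hx.1
  have hP : HasPeriodOn f (2 * (y - x)) (x - r) (y + r) := hx.hasPeriodOn hy hxy
  have hG : HasPeriodOn f (2 * (z - y)) (y - r) (y + r) :=
    (hy.hasPeriodOn hz hyz).mono le_rfl (by omega)
  refine hy.of_hasPeriodOn (hP.extend hG (by omega) (by omega) le_rfl (by omega))
    ?_ (by omega) (by omega) (by omega) (by omega) (by omega) (by omega)
  rw [show 2 * y = 2 * (y - (z - y)) + 2 * (z - y) by omega]
  exact Nat.add_modEq_right.symm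

end Windows

section Palindromes

variable {α : Type*}

theorem isPal_iff_getElem? (l : List α) :
    IsPal l ↔ ∀ i j, i + j + 1 = l.length → l[i]? = l[j]? := by
  refine ⟨fun h i j hij => ?_, fun h => List.ext_getElem? fun i => ?_⟩
  · rw [← List.getElem?_reverse' hij, h]
  · by_cases hi : i < l.length
    · rw [List.getElem?_reverse' (i := i) (j := l.length - 1 - i) (by omega)]
      exact h _ _ (by omega)
    · rw [List.getElem?_eq_none (by simpa using hi), List.getElem?_eq_none (by omega)]

/-- `c + r - 1` truncates when `c + r = 0`, where the factor is `w[0..0]` rather than empty. -/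
theorem isPal_factor_iff (w : List α) {c r : ℕ} (hr : 0 < r) (hrc : r ≤ c)
    (hcr : c + r ≤ w.length) :
    IsPal (factor w (c - r) (c + r - 1)) ↔ IsEvenPalAt (w[·]?) c r := by
  have hfac : factor w (c - r) (c + r - 1) = (w.drop (c - r)).take (2 * r) := by
    rw [factor, show c + r - 1 + 1 - (c - r) = 2 * r by omega]
  have hlen : (factor w (c - r) (c + r - 1)).length = 2 * r := by
    rw [hfac, List.length_take, List.length_drop]; omega
  have hget : ∀ i < 2 * r, (factor w (c - r) (c + r - 1))[i]? = w[c - r + i]? := by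
    intro i hi
    rw [hfac, List.getElem?_take, if_pos hi, List.getElem?_drop]
  rw [isPal_iff_getElem?, hlen]
  constructor
  · refine fun h => ⟨hrc, fun s t hst hs hs' => ?_⟩
    have := h (s - (c - r)) (t - (c - r)) (by omega)
    rwa [hget _ (by omega), hget _ (by omega), Nat.add_sub_cancel' hs,
      Nat.add_sub_cancel' (by omega)] at this
  · rintro ⟨-, h⟩ i j hij
    rw [hget i (by omega), hget j (by omega)]
    exact h _ _ (by omega) (by omega) (by omega)

theorem two_mul_lt_MEPal_iff (w : List α) (c τ : ℕ) :
    2 * τ < MEPal w c ↔ c + (τ + 1) ≤ w.length ∧ IsEvenPalAt (w[·]?) c (τ + 1) := by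
  rw [MEPal, Nat.mul_lt_mul_left two_pos]
  constructor
  · intro h
    obtain ⟨r, ⟨hrc, hcr, hpal⟩, hτr⟩ := exists_lt_of_lt_csSup' h
    exact ⟨by omega, ((isPal_factor_iff w (by omega) hrc hcr).1 hpal).mono hτr⟩
  · rintro ⟨hlen, hpal⟩
    exact le_csSup ⟨c, fun r hr => hr.1⟩
      ⟨hpal.1, hlen, (isPal_factor_iff w (Nat.succ_pos τ) hpal.1 hlen).2 hpal⟩

theorem sub_eq_sub_of_consecutive_MEPal (w : List α) {τ x y z : ℕ} (hxy : x < y) (hyz : y < z)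
    (hspan : z - x ≤ τ + 1) (hx : 2 * τ < MEPal w x) (hy : 2 * τ < MEPal w y)
    (hz : 2 * τ < MEPal w z) (gap_xy : ∀ c, x < c → c < y → ¬ 2 * τ < MEPal w c)
    (gap_yz : ∀ c, y < c → c < z → ¬ 2 * τ < MEPal w c) : y - x = z - y := by
  rw [two_mul_lt_MEPal_iff] at hx hy hz
  by_contra hne
  rcases Nat.lt_or_gt_of_ne hne with hlt | hlt
  · refine gap_yz (y + (y - x)) (by omega) (by omega) ((two_mul_lt_MEPal_iff _ _ _).2 ⟨?_, ?_⟩)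
    · omega
    · exact hx.2.add_of_sub_lt_sub hy.2 hz.2 hxy.le hyz.le hspan hlt
  · refine gap_xy (y - (z - y)) (by omega) (by omega) ((two_mul_lt_MEPal_iff _ _ _).2 ⟨?_, ?_⟩)
    · omega
    · exact hx.2.sub_of_sub_lt_sub hy.2 hz.2 hxy.le hyz.le hspan hlt

end Palindromes

theorem List.exists_forall_sub_eq_of_sub_eq_sub (l : List ℕ)
    (h : ∀ i, i + 2 < l.length → l[i + 1]! - l[i]! = l[i + 2]! - l[i + 1]!) :
    ∃ d, ∀ i, i + 1 < l.length → l[i + 1]! - l[i]! = d := by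
  refine ⟨l[1]! - l[0]!, fun i => ?_⟩
  induction i with
  | zero => exact fun _ => rfl
  | succ k ih =>
    intro hk
    show l[k + 2]! - l[k + 1]! = _
    rw [← h k (by omega)]
    exact ih (by omega)

namespace Finset

variable {α : Type*} [LinearOrder α] [Inhabited α] (s : Finset α) {i : ℕ}

theorem sort_getElem!_eq_orderEmbOfFin (hi : i < s.card) :
    (s.sort (· ≤ ·))[i]! = s.orderEmbOfFin rfl ⟨i, hi⟩ := by
  rw [orderEmbOfFin_apply, getElem!_pos _ i (by simpa using hi)]
  rfl

theorem sort_getElem!_mem (hi : i < s.card) : (s.sort (· ≤ ·))[i]! ∈ s := by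
  rw [sort_getElem!_eq_orderEmbOfFin s hi]
  exact orderEmbOfFin_mem s rfl _

theorem sort_getElem!_lt_getElem! {j : ℕ} (hij : i < j) (hj : j < s.card) :
    (s.sort (· ≤ ·))[i]! < (s.sort (· ≤ ·))[j]! := by
  rw [sort_getElem!_eq_orderEmbOfFin s (hij.trans hj), sort_getElem!_eq_orderEmbOfFin s hj]
  exact (s.orderEmbOfFin rfl).strictMono hij

theorem notMem_of_sort_getElem!_lt_lt (hi : i + 1 < s.card) {c : α}
    (h₁ : (s.sort (· ≤ ·))[i]! < c) (h₂ : c < (s.sort (· ≤ ·))[i + 1]!) : c ∉ s := by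
  intro hc
  obtain ⟨j, rfl⟩ : c ∈ Set.range (s.orderEmbOfFin rfl) := by
    rw [range_orderEmbOfFin]; exact hc
  rw [sort_getElem!_eq_orderEmbOfFin s (by omega), OrderEmbedding.lt_iff_lt] at h₁
  rw [sort_getElem!_eq_orderEmbOfFin s hi, OrderEmbedding.lt_iff_lt] at h₂
  have hij : i < (j : ℕ) := h₁
  have hji : (j : ℕ) < i + 1 := h₂
  omega

end Finset

theorem stmt7_general {α : Type*} (w : List α) (τ b : ℕ)
    (L : Finset ℕ) (hL : L = (Finset.Ico b (b + τ)).filter (fun c => 2 * τ < MEPal w c)) :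
    ∃ d : ℕ, ∀ i : ℕ, i + 1 < L.card →
      (L.sort (· ≤ ·))[i + 1]! - (L.sort (· ≤ ·))[i]! = d := by
  rw [← L.length_sort (· ≤ ·)]
  refine (L.sort (· ≤ ·)).exists_forall_sub_eq_of_sub_eq_sub fun i hi => ?_
  rw [Finset.length_sort] at hi
  have hL' : ∀ c, c ∈ L ↔ (b ≤ c ∧ c < b + τ) ∧ 2 * τ < MEPal w c := fun c => by
    rw [hL, Finset.mem_filter, Finset.mem_Ico]
  set l := L.sort (· ≤ ·)
  have hmem : ∀ j < L.card, b ≤ l[j]! ∧ l[j]! < b + τ ∧ 2 * τ < MEPal w l[j]! := by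
    intro j hj
    have hj := (hL' _).1 (L.sort_getElem!_mem hj)
    exact ⟨hj.1.1, hj.1.2, hj.2⟩
  have gap : ∀ j, j + 1 < L.card → ∀ c, l[j]! < c → c < l[j + 1]! →
      ¬ 2 * τ < MEPal w c :=
    fun j hj c h₁ h₂ hc => L.notMem_of_sort_getElem!_lt_lt hj h₁ h₂ <| by
      have := hmem j (by omega)
      have := hmem (j + 1) hj
      exact (hL' c).2 ⟨⟨by omega, by omega⟩, hc⟩
  obtain ⟨hbx, -, hx⟩ := hmem i (by omega)
  obtain ⟨-, -, hy⟩ := hmem (i + 1) (by omega)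
  obtain ⟨-, hzb, hz⟩ := hmem (i + 2) hi
  exact sub_eq_sub_of_consecutive_MEPal w (L.sort_getElem!_lt_getElem! (by omega) (by omega))
    (L.sort_getElem!_lt_getElem! (by omega) hi) (by omega) hx hy hz (gap i (by omega))
    (gap (i + 1) hi)

theorem stmt7 {α : Type*} (w : List α) (τ b : ℕ) (hτ : 1 ≤ τ)
    (hB : b + τ ≤ w.length)
    (L : Finset ℕ) (hL : L = (Finset.Ico b (b + τ)).filter (fun c => 2 * τ < MEPal w c))
    (hN : 3 ≤ L.card) :
    ∃ d : ℕ, ∀ i : ℕ, i + 1 < L.card →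
      (L.sort (· ≤ ·))[i + 1]! - (L.sort (· ≤ ·))[i]! = d :=
  stmt7_general w τ b L hL
end
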